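/- arXiv:2504.00669 — 5 statements merged into one kernel-verified Lean document; each statement's English description precedes it below -/
import Mathlib

section
/- Let p be an odd prime, G a finite p-group, and χ the character of an irreducible finite-dimensional complex representation of G with χ not the trivial character. Then ℚ(χ) ≠ ℚ; that is, there exists g ∈ G such that χ(g) is not a rational number. -/
/-!
If every value of `χ` were rational, look at the image of `G` in `GL(V)`. If it is trivial,
Schur's lemma forces `dim V = 1` and `χ = 1`. Otherwise it is a nontrivial `p`-group, so it has a
nontrivial central element `ρ z`; by Schur `ρ z = c • 1` with `c ≠ 1` and `c ^ p ^ k = 1`,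
`p ^ k` odd. But `χ z = c · dim V` is rational, so `c` is rational, and the only rational root
of unity of odd order is `1`.
-/

/-- An irreducible complex character of a group `G`: the trace character of some
irreducible (simple) finite-dimensional complex representation of `G`. -/
def IsIrredCharacter {G : Type} [Monoid G] (χ : G → ℂ) : Prop :=
  ∃ V : FDRep ℂ G, CategoryTheory.Simple V ∧ V.character = χ

open CategoryTheory Module

theorem IsPGroup.exists_map_ne_one_forall_commute {p : ℕ} [Fact p.Prime] {G H : Type*} [Group G]
    [Finite G] [Monoid H] (hG : IsPGroup p G) (φ : G →* H) (hφ : φ ≠ 1) :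
    ∃ z, φ z ≠ 1 ∧ ∀ g, Commute (φ z) (φ g) := by
  have : Nontrivial φ.toHomUnits.range := by
    obtain ⟨g, hg⟩ := DFunLike.ne_iff.mp hφ
    exact nontrivial_of_ne ⟨_, g, rfl⟩ 1 fun h => hg (congrArg (Units.val ∘ Subtype.val) h)
  have : Finite φ.toHomUnits.range := .of_surjective _ φ.toHomUnits.rangeRestrict_surjective
  have : Nontrivial (Subgroup.center φ.toHomUnits.range) :=
    (hG.of_surjective _ φ.toHomUnits.rangeRestrict_surjective).center_nontrivial
  obtain ⟨⟨⟨_, z, rfl⟩, hz⟩, hz1⟩ := exists_ne (1 : Subgroup.center φ.toHomUnits.range)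
  refine ⟨z, fun h => hz1 ?_, fun g => ?_⟩
  · exact Subtype.ext (Subtype.ext (Units.ext h))
  · have := Subgroup.mem_center_iff.mp hz ⟨_, g, rfl⟩
    exact congrArg (Units.val ∘ Subtype.val) this.symm

theorem IntermediateField.adjoin_range_ne_bot_of_exists_ne_ratCast {ι E : Type*} [Field E]
    [CharZero E] {f : ι → E} (h : ∃ i, ∀ q : ℚ, (q : E) ≠ f i) :
    IntermediateField.adjoin ℚ (Set.range f) ≠ ⊥ := by
  obtain ⟨i, hi⟩ := h
  rw [Ne, IntermediateField.adjoin_eq_bot_iff]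
  intro hsub
  obtain ⟨q, hq⟩ := IntermediateField.mem_bot.mp (hsub ⟨i, rfl⟩)
  exact hi q (by simpa using hq)

namespace FDRep

variable {k G : Type} [Field k] [Monoid G]

theorem nontrivial_of_simple (V : FDRep k G) [Simple V] : Nontrivial V := by
  by_contra h
  rw [not_nontrivial_iff_subsingleton] at h
  exact id_nonzero V (by ext v; exact Subsingleton.elim _ _)

theorem exists_eq_smul_one_of_commute [IsAlgClosed k] (V : FDRep k G) [Simple V]
    {f : V →ₗ[k] V} (hf : ∀ g, Commute f (V.ρ g)) : ∃ c : k, f = c • 1 := by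
  let F : V ⟶ V := ⟨FGModuleCat.ofHom f, fun g => by ext v; exact LinearMap.congr_fun (hf g) v⟩
  have hdim : finrank k (V ⟶ V) = 1 := by
    rw [finrank_hom_simple_simple V V, if_pos ⟨Iso.refl V⟩]
  obtain ⟨c, hc⟩ := (finrank_eq_one_iff_of_nonzero' (𝟙 V) (id_nonzero V)).mp hdim F
  exact ⟨c, congrArg (fun F : V ⟶ V => F.hom.hom.hom) hc.symm⟩

theorem finrank_eq_one_of_ρ_eq_one [IsAlgClosed k] (V : FDRep k G) [Simple V] (h : V.ρ = 1) :
    finrank k V = 1 := by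
  have := V.nontrivial_of_simple
  have hle : finrank k (V →ₗ[k] V) ≤ 1 :=
    finrank_le_one 1 fun f => (V.exists_eq_smul_one_of_commute (f := f) (by simp [h])).imp
      fun c hc => hc.symm
  rw [finrank_linearMap] at hle
  have := finrank_pos (R := k) (M := V)
  nlinarith

theorem character_eq_one_of_ρ_eq_one [IsAlgClosed k] (V : FDRep k G) [Simple V] (h : V.ρ = 1) :
    V.character = 1 := by
  ext g
  simp [character, h, V.finrank_eq_one_of_ρ_eq_one h]

theorem character_eq_of_ρ_eq_smul_one (V : FDRep k G) {g : G} {c : k} (h : V.ρ g = c • 1) :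
    V.character g = c * finrank k V := by
  simp [character, h]

theorem ρ_eq_one_of_eq_smul_one_of_odd [CharZero k] (V : FDRep k G) [Nontrivial V] {g : G}
    {c : k} (hc : V.ρ g = c • 1) {m : ℕ} (hm : Odd m) (hgm : g ^ m = 1)
    (hrat : ∃ q : ℚ, (q : k) = V.character g) : V.ρ g = 1 := by
  have hcm : c ^ m = 1 := by
    have h : c ^ m • (1 : Module.End k V) = (1 : k) • 1 :=
      calc c ^ m • (1 : Module.End k V) = (c • 1) ^ m := by rw [smul_pow, one_pow]
        _ = V.ρ (g ^ m) := by rw [map_pow, hc]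
        _ = (1 : k) • 1 := by rw [hgm, map_one, one_smul]
    exact smul_left_injective k one_ne_zero h
  obtain ⟨q, hq⟩ := hrat
  have hn : (finrank k V : k) ≠ 0 := Nat.cast_ne_zero.mpr finrank_pos.ne'
  have hcq : c = ((q / finrank k V : ℚ) : k) := by
    rw [Rat.cast_div, hq, V.character_eq_of_ρ_eq_smul_one hc, Rat.cast_natCast,
      mul_div_cancel_right₀ _ hn]
  have hq1 : q / finrank k V = 1 := by
    refine hm.pow_injective ?_
    simp only [one_pow]
    exact_mod_cast hcq ▸ hcm
  rw [hc, hcq, hq1, Rat.cast_one, one_smul]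

end FDRep

theorem stmt_0 {p : ℕ} (hp : p.Prime) (hodd : Odd p)
    {G : Type} [Group G] [Fintype G] (hpG : IsPGroup p G)
    (χ : G → ℂ) (hχ : IsIrredCharacter χ)
    (hnt : χ ≠ fun _ => 1) :
    IntermediateField.adjoin ℚ (Set.range χ) ≠ ⊥ ∧
      ∃ g : G, ∀ q : ℚ, (q : ℂ) ≠ χ g := by
  obtain ⟨V, hV, rfl⟩ := hχ
  have : Fact p.Prime := ⟨hp⟩
  have := V.nontrivial_of_simple
  have key : ∃ g : G, ∀ q : ℚ, (q : ℂ) ≠ V.character g := by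
    by_contra! hrat
    by_cases htriv : V.ρ = 1
    · exact hnt (V.character_eq_one_of_ρ_eq_one htriv)
    obtain ⟨z, hz1, hzc⟩ := hpG.exists_map_ne_one_forall_commute V.ρ htriv
    obtain ⟨c, hc⟩ := V.exists_eq_smul_one_of_commute hzc
    obtain ⟨k, hk⟩ := hpG z
    exact hz1 (V.ρ_eq_one_of_eq_smul_one_of_odd hc hodd.pow hk (hrat z))
  exact ⟨IntermediateField.adjoin_range_ne_bot_of_exists_ne_ratCast key, key⟩
end

section
/- Let p be a prime and G a finite p-group whose commutator subgroup G' is not contained in the center Z(G). If H is an abelian subgroup of G of index p, then H = C_G(G'). In particular, G has at most one abelian subgroup of index p. -/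
/-!
In a finite `p`-group, `p` is the smallest prime dividing `|G|`, so a subgroup `H` of index `p`
is normal; `G ⧸ H` then has prime order, hence is abelian, so `G' ≤ H`. As `H` is abelian it
centralizes `G'`, i.e. `H ≤ C_G(G')`. Since `G'` is not central, `C_G(G')` is proper, and a proper
subgroup containing a subgroup of prime index must equal it.
-/

namespace Subgroup

variable {G : Type*} [Group G]

theorem eq_or_eq_top_of_le_of_index_prime {K L : Subgroup G} (hKL : K ≤ L)
    (hK : K.index.Prime) : K = L ∨ L = ⊤ := by
  rw [← relIndex_mul_index hKL, Nat.prime_mul_iff] at hK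
  rcases hK with ⟨-, hL⟩ | ⟨-, hKL'⟩
  · exact Or.inr (index_eq_one.mp hL)
  · exact Or.inl (le_antisymm hKL (relIndex_eq_one.mp hKL'))

theorem commutator_le_of_index_prime {H : Subgroup G} [H.Normal] (hH : H.index.Prime) :
    _root_.commutator G ≤ H := by
  have : Fact (Nat.card (G ⧸ H)).Prime := ⟨hH⟩
  have : IsCyclic (G ⧸ H) := isCyclic_of_prime_card rfl
  exact Normal.quotient_commutative_iff_commutator_le.mp inferInstance

end Subgroup

theorem IsPGroup.normal_of_index_eq {p : ℕ} [hp : Fact p.Prime] {G : Type*} [Group G] [Finite G]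
    (hG : IsPGroup p G) {H : Subgroup G} (hH : H.index = p) : H.Normal := by
  obtain ⟨n, hn⟩ := hG.exists_card_eq
  have hn0 : n ≠ 0 := by
    rintro rfl
    have := H.index_dvd_card
    rw [hH, hn, pow_zero] at this
    exact hp.out.not_dvd_one this
  refine Subgroup.normal_of_index_eq_minFac_card ?_
  rw [hn, hp.out.pow_minFac hn0, hH]

theorem stmt_2 {p : ℕ} (hp : p.Prime)
    {G : Type} [Group G] [Fintype G] (hpG : IsPGroup p G)
    (hnc : ¬ commutator G ≤ Subgroup.center G)
    (H : Subgroup G) (hab : ∀ a ∈ H, ∀ b ∈ H, a * b = b * a)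
    (hidx : H.index = p) :
    H = Subgroup.centralizer (commutator G : Set G) := by
  have : Fact p.Prime := ⟨hp⟩
  have : H.Normal := hpG.normal_of_index_eq hidx
  have hH_le_centralizer : H ≤ Subgroup.centralizer H := fun x hx y hy ↦ hab y hy x hx
  have hH : H ≤ Subgroup.centralizer (commutator G : Set G) :=
    hH_le_centralizer.trans <| Subgroup.centralizer_le <|
      Subgroup.commutator_le_of_index_prime (hidx ▸ hp)
  refine (Subgroup.eq_or_eq_top_of_le_of_index_prime hH (hidx ▸ hp)).resolve_right ?_
  rwa [Subgroup.centralizer_eq_top_iff_subset]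
end

section
/- Let p be an odd prime and G a group of order p^5 such that |Z(G)| = p², the commutator subgroup G' is elementary abelian of order p², and G' is not contained in Z(G). Then the centralizer C_G(G') is an abelian subgroup of G of index p, and it is the unique abelian subgroup of G of index p. -/
/-!
Let `W = G' ⊓ Z(G)`. As a non-central normal subgroup of order `p²` of a `p`-group, `G'` meets
the centre in a subgroup `W` of order `p`; then `G'/W` is a normal subgroup of order `p` of the
`p`-group `G/W`, hence central, i.e. `⁅g, a⁆ ∈ W` for all `g` and all `a ∈ G'`. For a fixed
`a ∈ G' \ Z(G)` we have `G' = ⟨a⟩W`, so `C_G(G') = C_G(a)` is the kernel of the homomorphism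
`g ↦ ⁅g, a⁆` into `W`, and has index `p`. It contains `Z(G)G'`, of index `p` in it, as a central
subgroup, so its quotient by its own centre is cyclic and it is abelian. An abelian subgroup of
index `p` is normal with abelian quotient, so it contains `G'` and lies in `C_G(G')`; comparing
indices gives equality.
-/

open Subgroup
open scoped commutatorElement

theorem Subgroup.card_mul_relIndex {G : Type*} [Group G] {H K : Subgroup G} (h : H ≤ K) :
    Nat.card H * H.relIndex K = Nat.card K := by
  rw [← relIndex_bot_left, ← relIndex_bot_left]
  exact relIndex_mul_relIndex ⊥ H K bot_le h

theorem Subgroup.le_zpowers_sup_of_relIndex_prime {G : Type*} [Group G] {M N : Subgroup G}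
    (hMN : M ≤ N) (hp : (M.relIndex N).Prime) {a : G} (haN : a ∈ N) (haM : a ∉ M) :
    N ≤ zpowers a ⊔ M := by
  have hM : M ≤ N ⊓ (zpowers a ⊔ M) := le_inf hMN le_sup_right
  rw [← relIndex_mul_relIndex M _ N hM inf_le_left, Nat.prime_mul_iff] at hp
  rcases hp with ⟨-, h⟩ | ⟨-, h⟩
  · exact (relIndex_eq_one.mp h).trans inf_le_right
  · exact absurd (relIndex_eq_one.mp h ⟨haN, mem_sup_left (mem_zpowers a)⟩) haM

theorem Subgroup.centralizer_eq_centralizer_singleton {G : Type*} [Group G] {N : Subgroup G}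
    {a : G} (haN : a ∈ N) (hN : N ≤ zpowers a ⊔ center G) :
    centralizer (N : Set G) = centralizer {a} := by
  refine le_antisymm (centralizer_le (Set.singleton_subset_iff.mpr haN)) ?_
  rw [le_centralizer_iff]
  refine hN.trans (sup_le ?_ (center_le_centralizer _))
  exact zpowers_le.mpr fun g hg => mem_centralizer_singleton_iff.mp hg

theorem Subgroup.index_centralizer_singleton_dvd_card {G : Type*} [Group G] {M : Subgroup G}
    (hM : M ≤ center G) {a : G} (ha : ∀ g : G, ⁅g, a⁆ ∈ M) :
    (centralizer {a}).index ∣ Nat.card M := by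
  -- `g ↦ ⁅g, a⁆` is a homomorphism because its values are central
  let f : G →* G := MonoidHom.mk' (fun g => ⁅g, a⁆) fun x y => by
    have hc := mem_center_iff.mp (hM (ha y))
    simp only [commutatorElement_def] at hc ⊢
    calc x * y * a * (x * y)⁻¹ * a⁻¹ = x * (y * a * y⁻¹ * a⁻¹) * (a * x⁻¹ * a⁻¹) := by group
      _ = (y * a * y⁻¹ * a⁻¹) * (x * a * x⁻¹ * a⁻¹) := by rw [hc x]; group
      _ = (x * a * x⁻¹ * a⁻¹) * (y * a * y⁻¹ * a⁻¹) := (hc _).symm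
  have hker : f.ker = centralizer {a} := by
    ext g
    rw [MonoidHom.mem_ker, mem_centralizer_singleton_iff]
    exact commutatorElement_eq_one_iff_mul_comm
  rw [← hker, index_ker]
  exact card_dvd_of_le (by rintro _ ⟨g, rfl⟩; exact ha g)

theorem Subgroup.mul_comm_of_le_centralizer_of_relIndex_prime {G : Type*} [Group G]
    {H K : Subgroup G} (hK : K ≤ centralizer (H : Set G)) (hp : (K.relIndex H).Prime) :
    ∀ a ∈ H, ∀ b ∈ H, a * b = b * a := by
  have : Fact (K.relIndex H).Prime := ⟨hp⟩
  have hKZ : K.subgroupOf H ≤ center H := fun x hx =>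
    mem_center_iff.mpr fun y => Subtype.ext (mem_centralizer_iff.mp (hK hx) y y.2)
  have : IsCyclic (H ⧸ center H) :=
    isCyclic_of_card_dvd_prime (p := K.relIndex H)
      (by rw [← index_eq_card]; exact index_dvd_of_le hKZ)
  have := (QuotientGroup.mk' (center H)).isMulCommutative_of_isCyclic_of_ker_le_center
    (QuotientGroup.ker_mk' _).le
  exact fun a ha b hb => congrArg Subtype.val (this.is_comm.comm ⟨a, ha⟩ ⟨b, hb⟩)

theorem Subgroup.commutator_le_of_index_eq_minFac {G : Type*} [Group G] {H : Subgroup G}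
    (hH : H.index = (Nat.card G).minFac) : _root_.commutator G ≤ H := by
  rcases eq_or_ne (Nat.card G) 1 with h | h
  · rw [h, Nat.minFac_one, index_eq_one] at hH
    exact hH ▸ le_top
  have := normal_of_index_eq_minFac_card hH
  have : Fact (Nat.card G).minFac.Prime := ⟨Nat.minFac_prime h⟩
  have : IsCyclic (G ⧸ H) := isCyclic_of_prime_card (by rw [← index_eq_card, hH])
  exact Normal.quotient_commutative_iff_commutator_le.mp inferInstance

namespace IsPGroup

variable {p : ℕ} [Fact p.Prime] {G : Type*} [Group G] [Finite G]

theorem inf_center_ne_bot (hG : IsPGroup p G) {N : Subgroup G} [N.Normal] (hN : N ≠ ⊥) :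
    N ⊓ center G ≠ ⊥ := by
  have hpN : p ∣ Nat.card N :=
    (hG.to_subgroup N).card_eq_or_dvd.resolve_left (by rwa [Subgroup.card_eq_one])
  obtain ⟨z, hz, hz1⟩ :=
    (hG.of_equiv ConjAct.toConjAct).exists_fixed_point_of_prime_dvd_card_of_fixed_point N hpN
      (a := 1) fun g => smul_one g
  rw [Ne, eq_bot_iff_forall]
  push Not
  have hzZ : (z : G) ∈ MulAction.fixedPoints (ConjAct G) G := fun g => by
    simpa only [ConjAct.Subgroup.val_conj_smul] using congrArg Subtype.val (hz g)
  rw [ConjAct.fixedPoints_eq_center] at hzZ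
  exact ⟨z, ⟨z.2, hzZ⟩, fun h => hz1 (Subtype.ext h.symm)⟩

theorem le_center_of_card_eq_prime (hG : IsPGroup p G) {N : Subgroup G} [N.Normal]
    (hN : Nat.card N = p) : N ≤ center G := by
  have hN' : N ≠ ⊥ := by
    rintro rfl
    exact (Fact.out : p.Prime).ne_one (by rw [← hN, card_bot])
  have hdvd : Nat.card (N ⊓ center G : Subgroup G) ∣ p := hN ▸ card_dvd_of_le inf_le_left
  rcases (Fact.out : p.Prime).eq_one_or_self_of_dvd _ hdvd with h | h
  · exact absurd (card_eq_one.mp h) (hG.inf_center_ne_bot hN')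
  · exact inf_eq_left.mp (eq_of_le_of_card_ge inf_le_left (by rw [h, hN]))

theorem commutator_mem_of_relIndex_eq_prime (hG : IsPGroup p G) {M N : Subgroup G} [M.Normal]
    [hN : N.Normal] (h : M.relIndex N = p) (g : G) {n : G} (hn : n ∈ N) : ⁅g, n⁆ ∈ M := by
  let f := QuotientGroup.mk' M
  have hcard : Nat.card (N.map f) = p := by rw [← relIndex_ker, QuotientGroup.ker_mk', h]
  have : (N.map f).Normal := hN.map f (QuotientGroup.mk'_surjective M)
  have hcentral := (hG.to_quotient M).le_center_of_card_eq_prime hcard (mem_map_of_mem f hn)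
  rw [← QuotientGroup.eq_one_iff, ← QuotientGroup.mk'_apply, map_commutatorElement,
    commutatorElement_eq_one_iff_mul_comm]
  exact mem_center_iff.mp hcentral (f g)

section NoncentralOfOrderPSq

variable {N : Subgroup G} [N.Normal]

theorem card_inf_center_eq_prime (hG : IsPGroup p G) (hN : Nat.card N = p ^ 2)
    (hNZ : ¬ N ≤ center G) : Nat.card (N ⊓ center G : Subgroup G) = p := by
  have hN' : N ≠ ⊥ := fun h => hNZ (h ▸ bot_le)
  obtain ⟨k, hk, hcard⟩ :=
    (Nat.dvd_prime_pow Fact.out).mp (hN ▸ card_dvd_of_le (inf_le_left : N ⊓ center G ≤ N))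
  interval_cases k
  · rw [pow_zero, card_eq_one] at hcard
    exact absurd hcard (hG.inf_center_ne_bot hN')
  · rw [hcard, pow_one]
  · exact absurd (inf_eq_left.mp (eq_of_le_of_card_ge inf_le_left (by rw [hcard, hN]))) hNZ

theorem relIndex_inf_center_eq_prime (hG : IsPGroup p G) (hN : Nat.card N = p ^ 2)
    (hNZ : ¬ N ≤ center G) : (N ⊓ center G).relIndex N = p := by
  have := card_mul_relIndex (inf_le_left : N ⊓ center G ≤ N)
  rw [hG.card_inf_center_eq_prime hN hNZ, hN, sq] at this
  exact Nat.eq_of_mul_eq_mul_left (Fact.out : p.Prime).pos this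

theorem index_centralizer_eq_prime (hG : IsPGroup p G) (hN : Nat.card N = p ^ 2)
    (hNZ : ¬ N ≤ center G) : (centralizer (N : Set G)).index = p := by
  have hrel := hG.relIndex_inf_center_eq_prime hN hNZ
  obtain ⟨a, haN, haZ⟩ := SetLike.not_le_iff_exists.mp hNZ
  have hNa : N ≤ zpowers a ⊔ center G :=
    (le_zpowers_sup_of_relIndex_prime inf_le_left (hrel ▸ Fact.out) haN fun h => haZ h.2).trans
      (sup_le_sup_left inf_le_right _)
  have hdvd : (centralizer (N : Set G)).index ∣ p := by
    rw [centralizer_eq_centralizer_singleton haN hNa, ← hG.card_inf_center_eq_prime hN hNZ]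
    exact index_centralizer_singleton_dvd_card inf_le_right fun g =>
      hG.commutator_mem_of_relIndex_eq_prime hrel g haN
  refine ((Fact.out : p.Prime).eq_one_or_self_of_dvd _ hdvd).resolve_left fun h => hNZ ?_
  exact centralizer_eq_top_iff_subset.mp (index_eq_one.mp h)

theorem mul_comm_of_mem_centralizer (hG : IsPGroup p G) (hN : Nat.card N = p ^ 2)
    (hNZ : ¬ N ≤ center G) (hNab : ∀ a ∈ N, ∀ b ∈ N, a * b = b * a)
    (hZ : (center G).index = p ^ 3) :
    ∀ a ∈ centralizer (N : Set G), ∀ b ∈ centralizer (N : Set G), a * b = b * a := by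
  have hp : 0 < p := (Fact.out : p.Prime).pos
  have hZN : center G ⊔ N ≤ centralizer (N : Set G) :=
    sup_le (center_le_centralizer _) fun a ha => mem_centralizer_iff.mpr fun b hb => hNab b hb a ha
  have hindex : (center G ⊔ N).index = p ^ 2 := by
    have hrel : (center G).relIndex (center G ⊔ N) = p := by
      rw [relIndex_sup_left, ← inf_relIndex_right, inf_comm]
      exact hG.relIndex_inf_center_eq_prime hN hNZ
    have := relIndex_mul_index (le_sup_left : center G ≤ center G ⊔ N)
    rw [hrel, hZ, pow_succ'] at this
    exact Nat.eq_of_mul_eq_mul_left hp this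
  have hrel : (center G ⊔ N).relIndex (centralizer (N : Set G)) = p := by
    have := relIndex_mul_index hZN
    rw [hG.index_centralizer_eq_prime hN hNZ, hindex, sq] at this
    exact Nat.eq_of_mul_eq_mul_right hp this
  exact mul_comm_of_le_centralizer_of_relIndex_prime
    (sup_le (center_le_centralizer _) (le_centralizer_iff.mp le_rfl)) (by rw [hrel]; exact Fact.out)

end NoncentralOfOrderPSq

end IsPGroup

theorem stmt_3_general {p : ℕ} (hp : p.Prime)
    {G : Type} [Group G]
    (hcard : Nat.card G = p ^ 5)
    (hZcard : Nat.card (Subgroup.center G) = p ^ 2)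
    (hG'card : Nat.card (commutator G) = p ^ 2)
    (hG'ab : ∀ a ∈ commutator G, ∀ b ∈ commutator G, a * b = b * a)
    (hnc : ¬ commutator G ≤ Subgroup.center G) :
    (∀ a ∈ Subgroup.centralizer (commutator G : Set G),
      ∀ b ∈ Subgroup.centralizer (commutator G : Set G), a * b = b * a) ∧
    (Subgroup.centralizer (commutator G : Set G)).index = p ∧
    ∀ H : Subgroup G, (∀ a ∈ H, ∀ b ∈ H, a * b = b * a) → H.index = p →
      H = Subgroup.centralizer (commutator G : Set G) := by
  have : Fact p.Prime := ⟨hp⟩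
  have : Finite G := Nat.finite_of_card_ne_zero (by rw [hcard]; exact pow_ne_zero _ hp.ne_zero)
  have hG : IsPGroup p G := IsPGroup.of_card hcard
  have hC := hG.index_centralizer_eq_prime hG'card hnc
  have hZ : (center G).index = p ^ 3 := by
    have := card_mul_index (center G)
    rw [hZcard, hcard, show 5 = 2 + 3 from rfl, pow_add] at this
    exact Nat.eq_of_mul_eq_mul_left (pow_pos hp.pos 2) this
  refine ⟨hG.mul_comm_of_mem_centralizer hG'card hnc hG'ab hZ, hC, fun H hHab hH => ?_⟩
  have hmin : H.index = (Nat.card G).minFac := by rw [hcard, hp.pow_minFac (by norm_num), hH]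
  have hHC : H ≤ centralizer (commutator G : Set G) := fun h hh => mem_centralizer_iff.mpr
    fun x hx => hHab x (commutator_le_of_index_eq_minFac hmin hx) h hh
  refine le_antisymm hHC (relIndex_eq_one.mp ?_)
  have := relIndex_mul_index hHC
  rw [hC, hH] at this
  exact (Nat.mul_eq_right hp.ne_zero).mp this

theorem stmt_3 {p : ℕ} (hp : p.Prime) (hodd : Odd p)
    {G : Type} [Group G] [Fintype G]
    (hcard : Nat.card G = p ^ 5)
    (hZcard : Nat.card (Subgroup.center G) = p ^ 2)
    (hG'card : Nat.card (commutator G) = p ^ 2)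
    (hG'ab : ∀ a ∈ commutator G, ∀ b ∈ commutator G, a * b = b * a)
    (hG'exp : ∀ a ∈ commutator G, a ^ p = 1)
    (hnc : ¬ commutator G ≤ Subgroup.center G) :
    (∀ a ∈ Subgroup.centralizer (commutator G : Set G),
      ∀ b ∈ Subgroup.centralizer (commutator G : Set G), a * b = b * a) ∧
    (Subgroup.centralizer (commutator G : Set G)).index = p ∧
    ∀ H : Subgroup G, (∀ a ∈ H, ∀ b ∈ H, a * b = b * a) → H.index = p →
      H = Subgroup.centralizer (commutator G : Set G) :=
  stmt_3_general hp hcard hZcard hG'card hG'ab hnc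
end

section
/- Let p be an odd prime and G a finite p-group such that (G, Z(G)) is a Camina pair. Let H be a subgroup of G with Z(G) ⊆ H and [G : H]² = [G : Z(G)], and let ψ be a linear character of H whose restriction μ = ψ|_{Z(G)} is nontrivial (so that the induced class function ψ^G is an irreducible character of G vanishing on G ∖ Z(G) with values ψ^G(z) = [G : H]·μ(z) on Z(G)). Then ℚ(ψ) = ℚ(ψ^G) if and only if |ker ψ| = [G : H]·|ker μ|. -/
open scoped Classical in
/-- The class function on `G` induced from a function `ψ` on a subgroup `H`:
`ψ^G(g) = |H|⁻¹ · ∑_{x ∈ G} ψ°(x g x⁻¹)`, where `ψ°` is `ψ` on `H` and `0` off `H`. -/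
noncomputable def inducedFn {G : Type} [Group G] (H : Subgroup G) (ψ : H → ℂ) : G → ℂ :=
  fun g => (Nat.card H : ℂ)⁻¹ *
    ∑ᶠ x : G, if h : x * g * x⁻¹ ∈ H then ψ ⟨x * g * x⁻¹, h⟩ else 0

/-- `(G, Z(G))` is a Camina pair: `1 < Z(G) < G` and every `g ∉ Z(G)` is conjugate to
every element of the coset `g·Z(G)`. -/
def IsCaminaPairCenter (G : Type) [Group G] : Prop :=
  ⊥ < Subgroup.center G ∧ Subgroup.center G < (⊤ : Subgroup G) ∧
    ∀ g : G, g ∉ Subgroup.center G → ∀ z ∈ Subgroup.center G, IsConj g (g * z)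

open scoped Classical in
/-- `ψ` extended by zero to all of `G`. -/
noncomputable def tauFn {G : Type} [Group G] (H : Subgroup G) (ψ : H → ℂ) : G → ℂ :=
  fun y => if h : y ∈ H then ψ ⟨y, h⟩ else 0

open scoped Classical in
lemma inducedFn_eq_tau {G : Type} [Group G] [Fintype G] (H : Subgroup G) (ψ : H → ℂ) (g : G) :
    inducedFn H ψ g = (Nat.card H : ℂ)⁻¹ * ∑ x : G, tauFn H ψ (x * g * x⁻¹) := by
  unfold inducedFn
  rw [finsum_eq_sum_of_fintype]
  rfl

lemma tauFn_mul_mem {G : Type} [Group G] (H : Subgroup G) (ψ : ↥H →* ℂ) (y : G) {z : G}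
    (hz : z ∈ H) : tauFn H (fun h => ψ h) (y * z) = tauFn H (fun h => ψ h) y * ψ ⟨z, hz⟩ := by
  unfold tauFn
  by_cases hy : y ∈ H
  · rw [dif_pos hy, dif_pos (H.mul_mem hy hz)]
    exact map_mul ψ ⟨y, hy⟩ ⟨z, hz⟩
  · rw [dif_neg hy, dif_neg, zero_mul]
    intro hmem
    exact hy (by simpa using H.mul_mem hmem (H.inv_mem hz))

lemma inducedFn_central {G : Type} [Group G] [Fintype G] {H : Subgroup G}
    (hle : Subgroup.center G ≤ H) (ψ : ↥H →* ℂ) {g : G} (hg : g ∈ Subgroup.center G) :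
    inducedFn H (fun h => ψ h) g = (H.index : ℂ) * ψ ⟨g, hle hg⟩ := by
  classical
  have hconj : ∀ x : G, x * g * x⁻¹ = g := fun x => by
    rw [Subgroup.mem_center_iff.mp hg x, mul_inv_cancel_right]
  rw [inducedFn_eq_tau]
  have : ∀ x : G, tauFn H (fun h => ψ h) (x * g * x⁻¹) = ψ ⟨g, hle hg⟩ := by
    intro x
    rw [hconj x]
    unfold tauFn
    rw [dif_pos (hle hg)]
  rw [Finset.sum_congr rfl fun x _ => this x, Finset.sum_const, Finset.card_univ,
    nsmul_eq_mul]
  have hcard : (Fintype.card G : ℂ) = (H.index : ℂ) * (Nat.card ↥H : ℂ) := by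
    rw [← Nat.cast_mul, Subgroup.index_mul_card, Nat.card_eq_fintype_card]
  have hne : (Nat.card ↥H : ℂ) ≠ 0 := by
    have : 0 < Nat.card ↥H := Nat.card_pos
    exact_mod_cast this.ne'
  rw [← mul_assoc, hcard]
  field_simp

lemma inducedFn_mul_central {G : Type} [Group G] [Fintype G] {H : Subgroup G}
    (hle : Subgroup.center G ≤ H) (ψ : ↥H →* ℂ) (g : G) {z : G}
    (hz : z ∈ Subgroup.center G) :
    inducedFn H (fun h => ψ h) (g * z) = ψ ⟨z, hle hz⟩ * inducedFn H (fun h => ψ h) g := by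
  classical
  rw [inducedFn_eq_tau, inducedFn_eq_tau]
  have key : ∀ x : G, tauFn H (fun h => ψ h) (x * (g * z) * x⁻¹) =
      tauFn H (fun h => ψ h) (x * g * x⁻¹) * ψ ⟨z, hle hz⟩ := by
    intro x
    have hc : x⁻¹ * z = z * x⁻¹ := Subgroup.mem_center_iff.mp hz x⁻¹
    have e : x * (g * z) * x⁻¹ = x * g * x⁻¹ * z := by
      rw [show x * (g * z) * x⁻¹ = x * g * (z * x⁻¹) by group, ← hc]
      group
    rw [e, tauFn_mul_mem H ψ _ (hle hz)]
  rw [Finset.sum_congr rfl fun x _ => key x, ← Finset.sum_mul]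
  ring

lemma inducedFn_conj {G : Type} [Group G] [Fintype G] (H : Subgroup G) (ψ : ↥H →* ℂ)
    (c g : G) :
    inducedFn H (fun h => ψ h) (c * g * c⁻¹) = inducedFn H (fun h => ψ h) g := by
  classical
  rw [inducedFn_eq_tau, inducedFn_eq_tau]
  congr 1
  refine (Fintype.sum_equiv (Equiv.mulRight c)
    (fun x => tauFn H (fun h => ψ h) (x * (c * g * c⁻¹) * x⁻¹))
    (fun y => tauFn H (fun h => ψ h) (y * g * y⁻¹)) ?_)
  intro x
  simp only [Equiv.coe_mulRight]
  congr 1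
  group

lemma inducedFn_vanish {G : Type} [Group G] [Fintype G] {H : Subgroup G}
    (hle : Subgroup.center G ≤ H) (ψ : ↥H →* ℂ)
    (hcam : ∀ g : G, g ∉ Subgroup.center G → ∀ z ∈ Subgroup.center G, IsConj g (g * z))
    {z₀ : G} (hz₀ : z₀ ∈ Subgroup.center G) (hψz₀ : ψ ⟨z₀, hle hz₀⟩ ≠ 1)
    {g : G} (hg : g ∉ Subgroup.center G) :
    inducedFn H (fun h => ψ h) g = 0 := by
  obtain ⟨c, hc⟩ := isConj_iff.mp (hcam g hg z₀ hz₀)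
  have h1 : inducedFn H (fun h => ψ h) g = inducedFn H (fun h => ψ h) (g * z₀) := by
    rw [← hc, inducedFn_conj]
  rw [inducedFn_mul_central hle ψ g hz₀] at h1
  have := sub_eq_zero.mpr h1
  have h2 : inducedFn H (fun h => ψ h) g * (1 - ψ ⟨z₀, hle hz₀⟩) = 0 := by
    ring_nf
    ring_nf at this
    linear_combination this
  rcases mul_eq_zero.mp h2 with h | h
  · exact h
  · exact absurd (by linear_combination -h : ψ ⟨z₀, hle hz₀⟩ = 1) hψz₀

lemma range_eq_image {Γ : Type*} [Group Γ] (f : Γ →* ℂ) :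
    (Set.range fun g => f g) = Units.val '' (f.toHomUnits.range : Set ℂˣ) := by
  ext z
  constructor
  · rintro ⟨g, rfl⟩
    exact ⟨f.toHomUnits g, ⟨g, rfl⟩, f.coe_toHomUnits g⟩
  · rintro ⟨u, ⟨g, rfl⟩, rfl⟩
    exact ⟨g, (f.coe_toHomUnits g).symm⟩

lemma adjoin_range_eq_adjoin_gen {Γ : Type*} [Group Γ] (f : Γ →* ℂ)
    {ζ : ℂˣ} (hmem : ζ ∈ f.toHomUnits.range)
    (hgen : ∀ x ∈ f.toHomUnits.range, ∃ k : ℕ, ζ ^ k = x) :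
    IntermediateField.adjoin ℚ (Set.range fun g => f g) =
      IntermediateField.adjoin ℚ {(ζ : ℂ)} := by
  apply le_antisymm
  · rw [IntermediateField.adjoin_le_iff]
    rintro w ⟨g, rfl⟩
    obtain ⟨k, hk⟩ := hgen (f.toHomUnits g) ⟨g, rfl⟩
    have : f g = (ζ : ℂ) ^ k := by
      rw [← f.coe_toHomUnits g, ← hk]
      push_cast
      rfl
    simp only []
    rw [this]
    exact pow_mem (IntermediateField.mem_adjoin_simple_self ℚ _) k
  · rw [IntermediateField.adjoin_le_iff]
    rintro w hw
    rw [Set.mem_singleton_iff] at hw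
    subst hw
    obtain ⟨g, hg⟩ := hmem
    refine IntermediateField.subset_adjoin ℚ _ ⟨g, ?_⟩
    show f g = (ζ : ℂ)
    rw [← f.coe_toHomUnits g, hg]

lemma finrank_adjoin_primitive {ζ : ℂ} {n : ℕ} (hn : 0 < n) (h : IsPrimitiveRoot ζ n) :
    Module.finrank ℚ (IntermediateField.adjoin ℚ {ζ}) = Nat.totient n := by
  have hint : IsIntegral ℚ ζ := (h.isIntegral hn).tower_top
  rw [IntermediateField.adjoin.finrank hint, ← Polynomial.cyclotomic_eq_minpoly_rat h hn,
    Polynomial.natDegree_cyclotomic]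

lemma totient_ppow_inj {p : ℕ} (hp : p.Prime) (hodd : Odd p) {a b : ℕ}
    (h : Nat.totient (p ^ a) = Nat.totient (p ^ b)) : a = b := by
  have hp2 : p ≠ 2 := by
    rintro rfl
    exact (by decide : ¬ Odd 2) hodd
  have h3 : 2 < p := lt_of_le_of_ne hp.two_le (Ne.symm hp2)
  have hsm : StrictMono fun a : ℕ => Nat.totient (p ^ a) := by
    apply strictMono_nat_of_lt_succ
    intro a
    calc Nat.totient (p ^ a) ≤ p ^ a := Nat.totient_le _
      _ < p ^ a * (p - 1) := lt_mul_of_one_lt_right (pow_pos hp.pos a) (by omega)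
      _ = Nat.totient (p ^ (a + 1)) := by
          rw [Nat.totient_prime_pow hp (Nat.succ_pos a)]
          simp
  exact hsm.injective h

lemma card_eq_range_mul_ker {Γ : Type*} [Group Γ] (f : Γ →* ℂˣ) :
    Nat.card Γ = Nat.card f.range * Nat.card f.ker := by
  rw [Subgroup.card_eq_card_quotient_mul_card_subgroup f.ker,
    Nat.card_congr (QuotientGroup.quotientKerEquivRange f).toEquiv]

theorem stmt_11 {p : ℕ} (hp : p.Prime) (hodd : Odd p)
    {G : Type} [Group G] [Fintype G] (hpG : IsPGroup p G)
    (hcp : IsCaminaPairCenter G)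
    (H : Subgroup G) (hle : Subgroup.center G ≤ H)
    (hidx : H.index ^ 2 = (Subgroup.center G).index)
    (ψ : ↥H →* ℂ)
    (hnt : ∃ z, ∃ hz : z ∈ Subgroup.center G, ψ ⟨z, hle hz⟩ ≠ 1) :
    IntermediateField.adjoin ℚ (Set.range fun h => ψ h) =
        IntermediateField.adjoin ℚ (Set.range (inducedFn H fun h => ψ h)) ↔
      Nat.card (MonoidHom.ker ψ) =
        H.index * Nat.card (MonoidHom.ker (ψ.comp (Subgroup.inclusion hle))) := by
  classical
  haveI : Fact p.Prime := ⟨hp⟩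
  obtain ⟨z₀, hz₀, hψz₀⟩ := hnt
  set Z := Subgroup.center G with hZ
  set μ : ↥Z →* ℂ := ψ.comp (Subgroup.inclusion hle) with hμdef
  have hμval : ∀ z : ↥Z, μ z = ψ ⟨(z : G), hle z.2⟩ := fun z => rfl
  set ψu := ψ.toHomUnits with hψu
  set μu := μ.toHomUnits with hμu
  haveI : Finite ↥ψu.range := Finite.of_surjective _ ψu.rangeRestrict_surjective
  haveI : Finite ↥μu.range := Finite.of_surjective _ μu.rangeRestrict_surjective
  set n := Nat.card ψu.range with hn
  set m := Nat.card μu.range with hm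
  set kψ := Nat.card ψu.ker with hkψ
  set kμ := Nat.card μu.ker with hkμ
  have hipos : 0 < H.index := Nat.pos_of_ne_zero Subgroup.index_ne_zero_of_finite
  have hnpos : 0 < n := Nat.card_pos
  have hmpos : 0 < m := Nat.card_pos
  have hkψpos : 0 < kψ := Nat.card_pos
  have hkμpos : 0 < kμ := Nat.card_pos
  -- kernels agree
  have hkerψ : MonoidHom.ker ψ = ψu.ker := by
    ext a
    simp [MonoidHom.mem_ker, Units.ext_iff, hψu]
  have hkerμ : MonoidHom.ker μ = μu.ker := by
    ext a
    simp [MonoidHom.mem_ker, Units.ext_iff, hμu]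
  -- cardinality identities
  have hHn : Nat.card ↥H = n * kψ := card_eq_range_mul_ker ψu
  have hZm : Nat.card ↥Z = m * kμ := card_eq_range_mul_ker μu
  have hHZ : Nat.card ↥H = H.index * Nat.card ↥Z := by
    have h1 : H.index * Nat.card ↥H = Nat.card G := Subgroup.index_mul_card H
    have h2 : Z.index * Nat.card ↥Z = Nat.card G := Subgroup.index_mul_card Z
    have h3 : H.index * (H.index * Nat.card ↥Z) = H.index * Nat.card ↥H := by
      rw [h1, ← h2, ← hidx]
      ring
    exact (Nat.eq_of_mul_eq_mul_left hipos h3).symm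
  -- arithmetic equivalence
  have harith : n = m ↔ kψ = H.index * kμ := by
    have hkey : n * kψ = n * (H.index * kμ) → kψ = H.index * kμ :=
      fun h => Nat.eq_of_mul_eq_mul_left hnpos h
    constructor
    · intro hnm
      apply hkey
      calc n * kψ = H.index * (m * kμ) := by rw [← hHn, hHZ, hZm]
        _ = n * (H.index * kμ) := by rw [hnm]; ring
    · intro hk
      have h4 : n * (H.index * kμ) = m * (H.index * kμ) := by
        calc n * (H.index * kμ) = n * kψ := by rw [hk]
          _ = H.index * (m * kμ) := by rw [← hHn, hHZ, hZm]
          _ = m * (H.index * kμ) := by ring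
      exact Nat.eq_of_mul_eq_mul_right (Nat.mul_pos hipos hkμpos) h4
  -- range inclusion
  have hrle : μu.range ≤ ψu.range := by
    rintro u ⟨z, rfl⟩
    refine ⟨Subgroup.inclusion hle z, Units.ext ?_⟩
    show ψ (Subgroup.inclusion hle z) = μ z
    rw [hμval z]
    congr 1
  -- Step A: the induced function generates the same field as μ
  have hcam := hcp.2.2
  have hA : IntermediateField.adjoin ℚ (Set.range (inducedFn H fun h => ψ h)) =
      IntermediateField.adjoin ℚ (Set.range fun z => μ z) := by
    apply le_antisymm
    · rw [IntermediateField.adjoin_le_iff]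
      rintro w ⟨g, rfl⟩
      by_cases hg : g ∈ Z
      · rw [inducedFn_central hle ψ hg]
        refine mul_mem ?_ (IntermediateField.subset_adjoin ℚ _ ⟨⟨g, hg⟩, (hμval ⟨g, hg⟩)⟩)
        have := IntermediateField.algebraMap_mem
          (IntermediateField.adjoin ℚ (Set.range fun z => μ z)) ((H.index : ℚ))
        simpa using this
      · rw [inducedFn_vanish hle ψ hcam hz₀ hψz₀ hg]
        exact zero_mem _
    · rw [IntermediateField.adjoin_le_iff]
      rintro w ⟨z, rfl⟩
      have hval := inducedFn_central hle ψ z.2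
      have hne : (H.index : ℂ) ≠ 0 := Nat.cast_ne_zero.mpr hipos.ne'
      have hw : μ z = (H.index : ℂ)⁻¹ * inducedFn H (fun h => ψ h) (z : G) := by
        rw [hval, hμval]
        field_simp
      simp only []
      rw [hw]
      refine mul_mem ?_ (IntermediateField.subset_adjoin ℚ _ ⟨(z : G), rfl⟩)
      have := IntermediateField.algebraMap_mem
        (IntermediateField.adjoin ℚ (Set.range (inducedFn H fun h => ψ h)))
        ((H.index : ℚ)⁻¹)
      simpa using this
  rw [hA]
  -- reduce kernels
  have hgoalker : (Nat.card (MonoidHom.ker ψ) =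
      H.index * Nat.card (MonoidHom.ker (ψ.comp (Subgroup.inclusion hle)))) ↔
      kψ = H.index * kμ := by
    rw [hkerψ, ← hμdef, hkerμ]
  rw [hgoalker, ← harith]
  -- Now prove: field equality ↔ n = m
  constructor
  · -- fields equal → n = m
    intro hf
    -- generators
    obtain ⟨ζ, hζ⟩ := IsCyclic.exists_generator (α := ↥ψu.range)
    obtain ⟨ξ, hξ⟩ := IsCyclic.exists_generator (α := ↥μu.range)
    have hordζ : orderOf ((ζ : ℂˣ) : ℂ) = n := by
      rw [orderOf_units, Subgroup.orderOf_coe, orderOf_eq_card_of_forall_mem_zpowers hζ]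
    have hordξ : orderOf ((ξ : ℂˣ) : ℂ) = m := by
      rw [orderOf_units, Subgroup.orderOf_coe, orderOf_eq_card_of_forall_mem_zpowers hξ]
    have hprimζ : IsPrimitiveRoot ((ζ : ℂˣ) : ℂ) n :=
      ⟨by rw [← hordζ]; exact pow_orderOf_eq_one _,
        fun l hl => hordζ ▸ orderOf_dvd_of_pow_eq_one hl⟩
    have hprimξ : IsPrimitiveRoot ((ξ : ℂˣ) : ℂ) m :=
      ⟨by rw [← hordξ]; exact pow_orderOf_eq_one _,
        fun l hl => hordξ ▸ orderOf_dvd_of_pow_eq_one hl⟩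
    have hgenζ : ∀ x ∈ ψu.range, ∃ k : ℕ, (ζ : ℂˣ) ^ k = x := by
      intro x hx
      obtain ⟨k, hk⟩ := (mem_powers_iff_mem_zpowers).mpr (hζ ⟨x, hx⟩)
      exact ⟨k, by simpa using congrArg Subtype.val hk⟩
    have hgenξ : ∀ x ∈ μu.range, ∃ k : ℕ, (ξ : ℂˣ) ^ k = x := by
      intro x hx
      obtain ⟨k, hk⟩ := (mem_powers_iff_mem_zpowers).mpr (hξ ⟨x, hx⟩)
      exact ⟨k, by simpa using congrArg Subtype.val hk⟩
    have E1 := adjoin_range_eq_adjoin_gen ψ (ζ.2) hgenζ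
    have E2 := adjoin_range_eq_adjoin_gen μ (ξ.2) hgenξ
    have hfields : IntermediateField.adjoin ℚ {((ζ : ℂˣ) : ℂ)} =
        IntermediateField.adjoin ℚ {((ξ : ℂˣ) : ℂ)} := by
      rw [← E1, ← E2, hf]
    have htot : Nat.totient n = Nat.totient m := by
      rw [← finrank_adjoin_primitive hnpos hprimζ, ← finrank_adjoin_primitive hmpos hprimξ,
        hfields]
    -- n, m are powers of p
    haveI : Finite ↥H := Subtype.finite
    haveI : Finite ↥Z := Subtype.finite
    obtain ⟨e, he⟩ := IsPGroup.iff_card.mp (hpG.to_subgroup H)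
    obtain ⟨f', hf'⟩ := IsPGroup.iff_card.mp (hpG.to_subgroup Z)
    have hndvd : n ∣ p ^ e := he ▸ ⟨kψ, hHn⟩
    have hmdvd : m ∣ p ^ f' := hf' ▸ ⟨kμ, hZm⟩
    obtain ⟨a, -, hna⟩ := (Nat.dvd_prime_pow hp).mp hndvd
    obtain ⟨b, -, hmb⟩ := (Nat.dvd_prime_pow hp).mp hmdvd
    rw [hna, hmb] at htot
    rw [hna, hmb, totient_ppow_inj hp hodd htot]
  · -- n = m → fields equal
    intro hnm
    have hreq : μu.range = ψu.range :=
      Subgroup.eq_of_le_of_card_ge hrle (le_of_eq hnm)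
    have hsets : (Set.range fun h => ψ h) = (Set.range fun z => μ z) := by
      rw [range_eq_image ψ, range_eq_image μ, ← hψu, ← hμu, hreq]
    rw [hsets]
end

section
/- Let p ≥ 5 be a prime and G a group of order p^5 such that (G, Z(G)) is a Camina pair, |Z(G)| = p, and G' is elementary abelian of order p³ (as holds for the groups of order p^5 in the isoclinism family Φ10). Let μ be a nontrivial complex character of Z(G) and let ψ be any linear character of G' with ψ|_{Z(G)} = μ. Then the induced class function ψ^G is an irreducible complex character of G of degree p² satisfying ψ^G(g) = p²·μ(g) for g ∈ Z(G) and ψ^G(g) = 0 for g ∉ Z(G), and moreover ℚ(ψ) = ℚ(ψ^G) = ℚ(ζ_p), the p-th cyclotomic field. -/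
/-!
Let `χ` be the character of an irreducible constituent of the representation coinduced from `μ`,
so that `Z(G)` acts on it through the scalars `μ`. As `(G, Z(G))` is a Camina pair, every
`g ∉ Z(G)` is conjugate to `g z` for a central `z` with `μ z ≠ 1`; this multiplies both `ψ^G(g)`
and `χ(g)` by `μ z`, so both vanish off `Z(G)`. The same conjugation shows `Z(G) ≤ G'`, so
`ψ^G = |G : G'| μ = p² μ` on `Z(G)`, while `χ = χ(1) μ` there and `⟨χ, χ⟩ = 1` forces
`χ(1)² = |G : Z(G)| = p⁴`. Hence `χ = ψ^G`. The values of `ψ` are `p`-th roots of unity, those of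
`ψ^G` are `0` or `p²` times one, and `μ` takes a primitive one.
-/

universe u

namespace Subrepresentation

variable {k G V : Type*} [Field k] [Monoid G] [AddCommGroup V] [Module k V]
  {ρ : Representation k G V}

@[simp]
lemma toSubmodule_bot : (⊥ : Subrepresentation ρ).toSubmodule = ⊥ := rfl

@[simp]
lemma toSubmodule_top : (⊤ : Subrepresentation ρ).toSubmodule = ⊤ := rfl

def mapSubtype (σ : Subrepresentation ρ) (τ : Subrepresentation σ.toRepresentation) :
    Subrepresentation ρ where
  toSubmodule := τ.toSubmodule.map σ.toSubmodule.subtype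
  apply_mem_toSubmodule := by
    rintro g - ⟨v, hv, rfl⟩
    exact ⟨_, τ.apply_mem_toSubmodule g hv, rfl⟩

theorem isIrreducible_of_isAtom {σ : Subrepresentation ρ} (hσ : IsAtom σ) :
    σ.toRepresentation.IsIrreducible := by
  have hinj := Submodule.map_injective_of_injective σ.toSubmodule.injective_subtype
  refine { toNontrivial := ⟨⊥, ⊤, fun h => hσ.1 ?_⟩, eq_bot_or_eq_top := fun τ => ?_ }
  · apply toSubmodule_injective
    simpa [mapSubtype, Submodule.map_subtype_top] using
      (congrArg (fun τ => (σ.mapSubtype τ).toSubmodule) h).symm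
  · rcases hσ.le_iff.mp (show σ.mapSubtype τ ≤ σ from Submodule.map_subtype_le _ _) with h | h
    · left
      apply toSubmodule_injective
      apply hinj
      simpa [mapSubtype] using congrArg toSubmodule h
    · right
      apply toSubmodule_injective
      apply hinj
      simpa [mapSubtype] using congrArg toSubmodule h

variable [FiniteDimensional k V]

instance : WellFoundedLT (Subrepresentation ρ) :=
  (show StrictMono (toSubmodule (ρ := ρ)) from fun _ _ h => h).wellFoundedLT

theorem exists_isIrreducible [Nontrivial V] (ρ : Representation k G V) :
    ∃ σ : Subrepresentation ρ, σ.toRepresentation.IsIrreducible := by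
  have := isAtomic_of_orderBot_wellFounded_lt (α := Subrepresentation ρ) wellFounded_lt
  have htop : (⊤ : Subrepresentation ρ) ≠ ⊥ := fun h =>
    (top_ne_bot : (⊤ : Submodule k V) ≠ ⊥) (congrArg toSubmodule h)
  obtain ⟨σ, hσ, -⟩ := (eq_bot_or_exists_atom_le (⊤ : Subrepresentation ρ)).resolve_left htop
  exact ⟨σ, isIrreducible_of_isAtom hσ⟩

end Subrepresentation

namespace Representation

section Coind

variable {k G : Type*} [Field k] [Group G]

def ofCharacter (μ : G →* k) : Representation k G k :=
  (Algebra.lmul k k : k →* Module.End k k).comp μ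

@[simp]
lemma ofCharacter_apply (μ : G →* k) (g : G) (a : k) : ofCharacter μ g a = μ g * a := rfl

lemma coind_center_apply (μ : Subgroup.center G →* k) (z : Subgroup.center G) :
    coind (Subgroup.center G).subtype (ofCharacter μ) z = μ z • 1 := by
  ext f x
  change f.1 (x * z) = μ z * f.1 x
  rw [Subgroup.mem_center_iff.mp z.2 x]
  exact f.2 z x

instance (μ : Subgroup.center G →* k) :
    Nontrivial (coindV (Subgroup.center G).subtype (ofCharacter μ)) := by
  classical
  refine ⟨⟨⟨fun x => if h : x ∈ Subgroup.center G then μ ⟨x, h⟩ else 0, ?_⟩, 0, ?_⟩⟩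
  · intro z x
    by_cases hx : x ∈ Subgroup.center G
    · simp [hx, mul_mem z.2 hx, ← map_mul]
      rfl
    · simp [hx, (Subgroup.mul_mem_cancel_left _ z.2).not.mpr hx]
  · intro h
    have h1 := congrFun (congrArg Subtype.val h) 1
    simp only [Subgroup.one_mem, dif_pos] at h1
    exact one_ne_zero ((map_one μ).symm.trans h1)

end Coind

section Character

variable {k G V : Type*} [Field k] [Group G] [AddCommGroup V] [Module k V]
  (ρ : Representation k G V)

theorem character_eq_mul_finrank_of_eq_smul [FiniteDimensional k V] {g : G} {c : k}
    (h : ρ g = c • 1) : ρ.character g = c * Module.finrank k V := by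
  rw [character, h, map_smul, LinearMap.trace_one, smul_eq_mul]

theorem character_eq_zero_of_isConj_mul {g z : G} {c : k} (hz : ρ z = c • 1) (hc : c ≠ 1)
    (hg : IsConj g (g * z)) : ρ.character g = 0 := by
  obtain ⟨x, hx⟩ := isConj_iff.mp hg
  have h : ρ.character g = c * ρ.character g := by
    calc ρ.character g = ρ.character (g * z) := by rw [← hx, char_conj]
      _ = c * ρ.character g := by
        rw [character, map_mul, hz, mul_smul_comm, mul_one, map_smul, smul_eq_mul, character]
  exact (mul_left_eq_self₀.mp h.symm).resolve_left hc

theorem sum_character_mul_character_inv_eq_card [FiniteDimensional k V] [Fintype G]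
    [IsAlgClosed k] [CharZero k] [ρ.IsIrreducible] :
    ∑ g, ρ.character g * ρ.character g⁻¹ = Nat.card G := by
  have hG : (Nat.card G : k) ≠ 0 := Nat.cast_ne_zero.mpr Nat.card_pos.ne'
  have := invertibleOfNonzero hG
  have h := char_orthonormal ρ ρ
  rw [if_pos ⟨Equiv.refl ρ⟩] at h
  exact ((inv_mul_eq_one₀ hG).mp h).symm

end Character

end Representation

namespace FDRep

variable {k G : Type u} [Field k] [Group G]

theorem simple_of_isIrreducible [Fintype G] [IsAlgClosed k] [CharZero k] (X : FDRep k G)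
    [Representation.IsIrreducible X.ρ] : CategoryTheory.Simple X :=
  (simple_iff_char_is_norm_one X).mpr (Representation.sum_character_mul_character_inv_eq_card X.ρ)

theorem exists_isIrreducible_center_eq_smul [Finite G] (μ : Subgroup.center G →* k) :
    ∃ X : FDRep k G, Representation.IsIrreducible X.ρ ∧
      ∀ z : Subgroup.center G, X.ρ z = μ z • 1 := by
  obtain ⟨σ, hσ⟩ := Subrepresentation.exists_isIrreducible
    (Representation.coind (Subgroup.center G).subtype (Representation.ofCharacter μ))
  refine ⟨FDRep.of (V := σ.toSubmodule) σ.toRepresentation, by rwa [FDRep.of_ρ'], fun z => ?_⟩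
  rw [FDRep.of_ρ']
  ext v : 2
  exact LinearMap.congr_fun (Representation.coind_center_apply μ z) v.1

end FDRep

section InducedFn

variable {G : Type} [Group G] [Fintype G] {H : Subgroup G}

theorem inducedFn_of_mem_center (ψ : H → ℂ) {g : G} (hg : g ∈ Subgroup.center G)
    (hgH : g ∈ H) : inducedFn H ψ g = H.index * ψ ⟨g, hgH⟩ := by
  have hconj (x : G) : x * g * x⁻¹ = g := by
    rw [Subgroup.mem_center_iff.mp hg x, mul_inv_cancel_right]
  have hH : (Nat.card H : ℂ) ≠ 0 := Nat.cast_ne_zero.mpr Nat.card_pos.ne'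
  have hmem (x : G) : x * g * x⁻¹ ∈ H := (hconj x).symm ▸ hgH
  simp only [inducedFn, finsum_eq_sum_of_fintype, dif_pos (hmem _), hconj]
  rw [Finset.sum_congr rfl (g := fun _ => ψ ⟨g, hgH⟩) fun _ _ => rfl, Finset.sum_const,
    Finset.card_univ, nsmul_eq_mul, ← Nat.card_eq_fintype_card, ← H.card_mul_index, Nat.cast_mul]
  field_simp

theorem inducedFn_eq_zero_of_isConj_mul (ψ : H →* ℂ) {g z : G} (hz : z ∈ Subgroup.center G)
    (hzH : z ∈ H) (hψz : ψ ⟨z, hzH⟩ ≠ 1) (hg : IsConj g (g * z)) :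
    inducedFn H (fun h => ψ h) g = 0 := by
  classical
  obtain ⟨c, hc⟩ := isConj_iff.mp hg
  set t : G → ℂ := fun x => if h : x * g * x⁻¹ ∈ H then ψ ⟨x * g * x⁻¹, h⟩ else 0 with ht
  have hconj (x : G) : x * c * g * (x * c)⁻¹ = x * g * x⁻¹ * z := by
    calc x * c * g * (x * c)⁻¹ = x * (c * g * c⁻¹) * x⁻¹ := by group
      _ = x * g * (z * x⁻¹) := by rw [hc]; group
      _ = x * g * x⁻¹ * z := by rw [← Subgroup.mem_center_iff.mp hz x⁻¹]; group
  have hshift (x : G) : t (x * c) = ψ ⟨z, hzH⟩ * t x := by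
    by_cases hx : x * g * x⁻¹ ∈ H
    · have hxc : x * c * g * (x * c)⁻¹ ∈ H := hconj x ▸ mul_mem hx hzH
      simp only [ht, dif_pos hx, dif_pos hxc]
      rw [mul_comm, ← map_mul]
      exact congrArg ψ (Subtype.ext (hconj x))
    · have hxc : x * c * g * (x * c)⁻¹ ∉ H := by
        rw [hconj x]; exact fun h => hx ((H.mul_mem_cancel_right hzH).mp h)
      simp only [ht, dif_neg hx, dif_neg hxc, mul_zero]
  have hsum : ∑ x, t x = ψ ⟨z, hzH⟩ * ∑ x, t x := by
    rw [Finset.mul_sum, ← Equiv.sum_comp (Equiv.mulRight c) t]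
    exact Finset.sum_congr rfl fun x _ => hshift x
  rw [inducedFn, finsum_eq_sum_of_fintype, (mul_left_eq_self₀.mp hsum.symm).resolve_left hψz,
    mul_zero]

end InducedFn

namespace IsCaminaPairCenter

open Subgroup
open scoped commutatorElement

variable {G : Type} [Group G]

theorem center_le_commutator (hcp : IsCaminaPairCenter G) : center G ≤ commutator G := by
  intro z hz
  obtain ⟨g, -, hg⟩ := SetLike.exists_of_lt hcp.2.1
  obtain ⟨c, hc⟩ := isConj_iff.mp (hcp.2.2 g hg z hz)
  have hz : z = ⁅g⁻¹, c⁆ := by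
    rw [commutatorElement_def, inv_inv, mul_assoc _ c, mul_assoc, hc, inv_mul_cancel_left]
  exact hz ▸ commutator_mem_commutator (mem_top _) (mem_top _)

theorem inducedFn_eq_zero [Fintype G] (hcp : IsCaminaPairCenter G) {H : Subgroup G}
    (hH : center G ≤ H) (ψ : H →* ℂ) (hψ : ∃ z : center G, ψ ⟨z, hH z.2⟩ ≠ 1) {g : G}
    (hg : g ∉ center G) : inducedFn H (fun h => ψ h) g = 0 :=
  let ⟨z, hz⟩ := hψ
  inducedFn_eq_zero_of_isConj_mul ψ z.2 (hH z.2) hz (hcp.2.2 g hg z z.2)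

variable {k V : Type*} [Field k] [AddCommGroup V] [Module k V] {ρ : Representation k G V}
  {μ : center G →* k}

theorem character_eq_zero (hcp : IsCaminaPairCenter G) (hρ : ∀ z : center G, ρ z = μ z • 1)
    (hμ : ∃ z, μ z ≠ 1) {g : G} (hg : g ∉ center G) : ρ.character g = 0 :=
  let ⟨z, hz⟩ := hμ
  ρ.character_eq_zero_of_isConj_mul (hρ z) hz (hcp.2.2 g hg z z.2)

variable [FiniteDimensional k V] [Fintype G] [IsAlgClosed k] [CharZero k] [ρ.IsIrreducible]

theorem finrank_sq_eq_index (hcp : IsCaminaPairCenter G) (hρ : ∀ z : center G, ρ z = μ z • 1)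
    (hμ : ∃ z, μ z ≠ 1) : Module.finrank k V ^ 2 = (center G).index := by
  classical
  have hterm (g : G) : ρ.character g * ρ.character g⁻¹ =
      if g ∈ center G then (Module.finrank k V : k) ^ 2 else 0 := by
    split_ifs with hg
    · rw [ρ.character_eq_mul_finrank_of_eq_smul (hρ ⟨g, hg⟩),
        ρ.character_eq_mul_finrank_of_eq_smul (g := g⁻¹) (hρ ⟨g, hg⟩⁻¹)]
      have hμinv : μ ⟨g, hg⟩ * μ ⟨g, hg⟩⁻¹ = 1 := by rw [← map_mul, mul_inv_cancel, map_one]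
      linear_combination (Module.finrank k V : k) ^ 2 * hμinv
    · rw [hcp.character_eq_zero hρ hμ hg, zero_mul]
  have hsum := ρ.sum_character_mul_character_inv_eq_card
  rw [Finset.sum_congr rfl fun g _ => hterm g, ← Finset.sum_filter, Finset.sum_const,
    ← Fintype.card_subtype, ← Nat.card_eq_fintype_card, nsmul_eq_mul,
    ← (center G).card_mul_index] at hsum
  exact Nat.eq_of_mul_eq_mul_left Nat.card_pos (by exact_mod_cast hsum)

theorem character_eq (hcp : IsCaminaPairCenter G) (hρ : ∀ z : center G, ρ z = μ z • 1)
    (hμ : ∃ z, μ z ≠ 1) {f : G → k} {d : ℕ} (hd : d ^ 2 = (center G).index)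
    (hf : ∀ g (hg : g ∈ center G), f g = d * μ ⟨g, hg⟩) (hf' : ∀ g ∉ center G, f g = 0) :
    ρ.character = f := by
  have hdim : Module.finrank k V = d :=
    Nat.pow_left_injective two_ne_zero ((hcp.finrank_sq_eq_index hρ hμ).trans hd.symm)
  funext g
  by_cases hg : g ∈ center G
  · rw [hf g hg, ρ.character_eq_mul_finrank_of_eq_smul (hρ ⟨g, hg⟩), hdim, mul_comm]
  · rw [hf' g hg, hcp.character_eq_zero hρ hμ hg]

end IsCaminaPairCenter

theorem Subgroup.index_eq_pow_of_card_eq_pow {G : Type*} [Group G] {H : Subgroup G}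
    {p a b : ℕ} (hp : 0 < p) (hH : Nat.card H = p ^ a) (hG : Nat.card G = p ^ (a + b)) :
    H.index = p ^ b :=
  Nat.eq_of_mul_eq_mul_left (pow_pos hp a) (by rw [← pow_add, ← hG, ← hH, H.card_mul_index])

namespace IntermediateField

theorem adjoin_range_eq_adjoin_simple {K L α : Type*} [Field K] [Field L] [Algebra K L]
    {f : α → L} {ζ : L} {n : ℕ} [NeZero n] (hζ : IsPrimitiveRoot ζ n) {c : K} (hc : c ≠ 0)
    (hf : ∀ a, f a = 0 ∨ ∃ x : L, x ^ n = 1 ∧ f a = c • x) (hfζ : ∃ a, f a = c • ζ) :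
    adjoin K (Set.range f) = K⟮ζ⟯ := by
  apply le_antisymm
  · rw [adjoin_le_iff]
    rintro - ⟨a, rfl⟩
    rcases hf a with h | ⟨x, hx, h⟩
    · exact h ▸ zero_mem _
    · obtain ⟨i, -, rfl⟩ := hζ.eq_pow_of_pow_eq_one hx
      exact h ▸ smul_mem _ (pow_mem (mem_adjoin_simple_self K ζ) i)
  · obtain ⟨a, ha⟩ := hfζ
    rw [adjoin_simple_le_iff, ← inv_smul_smul₀ hc ζ, ← ha]
    exact smul_mem _ (subset_adjoin K _ (Set.mem_range_self a))

end IntermediateField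

theorem stmt_18_general {p : ℕ} (hp : p.Prime)
    {G : Type} [Group G] [Fintype G]
    (hcard : Nat.card G = p ^ 5)
    (hcp : IsCaminaPairCenter G)
    (hZ : Nat.card (Subgroup.center G) = p)
    (hG'card : Nat.card (commutator G) = p ^ 3)
    (hG'exp : ∀ a ∈ commutator G, a ^ p = 1)
    (μ : ↥(Subgroup.center G) →* ℂ) (hμ : ∃ z, μ z ≠ 1)
    (ψ : ↥(commutator G) →* ℂ)
    (hres : ∀ (z : G) (hz : z ∈ Subgroup.center G) (hz' : z ∈ commutator G),
      ψ ⟨z, hz'⟩ = μ ⟨z, hz⟩) :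
    IsIrredCharacter (inducedFn (commutator G) fun h => ψ h) ∧
    (inducedFn (commutator G) fun h => ψ h) 1 = (p : ℂ) ^ 2 ∧
    (∀ g (hg : g ∈ Subgroup.center G),
      (inducedFn (commutator G) fun h => ψ h) g = (p : ℂ) ^ 2 * μ ⟨g, hg⟩) ∧
    (∀ g ∉ Subgroup.center G, (inducedFn (commutator G) fun h => ψ h) g = 0) ∧
    ∃ ζ : ℂ, IsPrimitiveRoot ζ p ∧
      IntermediateField.adjoin ℚ (Set.range fun h => ψ h) =
        IntermediateField.adjoin ℚ {ζ} ∧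
      IntermediateField.adjoin ℚ (Set.range (inducedFn (commutator G) fun h => ψ h)) =
        IntermediateField.adjoin ℚ {ζ} := by
  have := Fact.mk hp
  have hZG' := hcp.center_le_commutator
  obtain ⟨z₀, hz₀⟩ := hμ
  have hμp (z : Subgroup.center G) : μ z ^ p = 1 := by
    rw [← map_pow, ← hZ, pow_card_eq_one', map_one]
  have hζ : IsPrimitiveRoot (μ z₀) p := orderOf_eq_prime (hμp z₀) hz₀ ▸ IsPrimitiveRoot.orderOf _
  have hcenter (g : G) (hg : g ∈ Subgroup.center G) :
      inducedFn (commutator G) (fun h => ψ h) g = p ^ 2 * μ ⟨g, hg⟩ := by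
    rw [inducedFn_of_mem_center _ hg (hZG' hg), hres, (commutator G).index_eq_pow_of_card_eq_pow
      (b := 2) hp.pos hG'card hcard, Nat.cast_pow]
  have hoff (g : G) (hg : g ∉ Subgroup.center G) : inducedFn (commutator G) (fun h => ψ h) g = 0 :=
    hcp.inducedFn_eq_zero hZG' ψ ⟨z₀, (hres z₀ z₀.2 _).trans_ne hz₀⟩ hg
  obtain ⟨X, hX, hXμ⟩ := FDRep.exists_isIrreducible_center_eq_smul μ
  have hχ : X.character = inducedFn (commutator G) fun h => ψ h :=
    hcp.character_eq hXμ ⟨z₀, hz₀⟩ (d := p ^ 2)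
      (by rw [(Subgroup.center G).index_eq_pow_of_card_eq_pow (a := 1) (b := 4) hp.pos
        (hZ.trans (pow_one p).symm) hcard, ← pow_mul])
      (by exact_mod_cast hcenter) hoff
  refine ⟨⟨X, X.simple_of_isIrreducible, hχ⟩, ?_, hcenter, hoff, μ z₀, hζ, ?_, ?_⟩
  · rw [hcenter 1 (one_mem _)]
    exact mul_right_eq_self₀.mpr (Or.inl (map_one μ))
  · refine IntermediateField.adjoin_range_eq_adjoin_simple hζ one_ne_zero (fun h => Or.inr
      ⟨ψ h, ?_, (one_smul ℚ _).symm⟩) ⟨⟨z₀, hZG' z₀.2⟩, by rw [one_smul, hres]⟩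
    rw [← map_pow, (Subtype.ext (hG'exp h h.2) : h ^ p = 1), map_one]
  · refine IntermediateField.adjoin_range_eq_adjoin_simple hζ (c := (p : ℚ) ^ 2)
      (f := inducedFn (commutator G) fun h => ψ h) (pow_ne_zero 2 (Nat.cast_ne_zero.mpr hp.ne_zero))
      (fun g => ?_) ⟨z₀, by rw [hcenter, Rat.smul_def]; push_cast; rfl⟩
    by_cases hg : g ∈ Subgroup.center G
    · exact Or.inr ⟨μ ⟨g, hg⟩, hμp _, by rw [hcenter g hg, Rat.smul_def]; push_cast; rfl⟩
    · exact Or.inl (hoff g hg)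

theorem stmt_18 {p : ℕ} (hp : p.Prime) (hp5 : 5 ≤ p)
    {G : Type} [Group G] [Fintype G]
    (hcard : Nat.card G = p ^ 5)
    (hcp : IsCaminaPairCenter G)
    (hZ : Nat.card (Subgroup.center G) = p)
    (hG'card : Nat.card (commutator G) = p ^ 3)
    (hG'ab : ∀ a ∈ commutator G, ∀ b ∈ commutator G, a * b = b * a)
    (hG'exp : ∀ a ∈ commutator G, a ^ p = 1)
    (μ : ↥(Subgroup.center G) →* ℂ) (hμ : ∃ z, μ z ≠ 1)
    (ψ : ↥(commutator G) →* ℂ)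
    (hres : ∀ (z : G) (hz : z ∈ Subgroup.center G) (hz' : z ∈ commutator G),
      ψ ⟨z, hz'⟩ = μ ⟨z, hz⟩) :
    IsIrredCharacter (inducedFn (commutator G) fun h => ψ h) ∧
    (inducedFn (commutator G) fun h => ψ h) 1 = (p : ℂ) ^ 2 ∧
    (∀ g (hg : g ∈ Subgroup.center G),
      (inducedFn (commutator G) fun h => ψ h) g = (p : ℂ) ^ 2 * μ ⟨g, hg⟩) ∧
    (∀ g ∉ Subgroup.center G, (inducedFn (commutator G) fun h => ψ h) g = 0) ∧
    ∃ ζ : ℂ, IsPrimitiveRoot ζ p ∧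
      IntermediateField.adjoin ℚ (Set.range fun h => ψ h) =
        IntermediateField.adjoin ℚ {ζ} ∧
      IntermediateField.adjoin ℚ (Set.range (inducedFn (commutator G) fun h => ψ h)) =
        IntermediateField.adjoin ℚ {ζ} :=
  stmt_18_general hp hcard hcp hZ hG'card hG'exp μ hμ ψ hres
end
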